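/- Let H be an n×n complex Hermitian matrix and let λ be an eigenvalue of H of algebraic multiplicity s > 1. Then det(λ·1 − H) = 0 and, for every integer r with 1 ≤ r < s, the reduced order-one complement of order r of the characteristic matrix vanishes identically: D_r(λ·1 − H) = 0. -/
import Mathlib

/-- The reduced order-one complement of order `r` of an `n×n` matrix `A`:
the matrix whose `(i,j)` entry is the coefficient of `z^(n-r)` in the `(i,j)` entry
of `adjugate (1 + z • A)`, computed over the polynomial ring `R[z]`. -/
noncomputable def redComp {R : Type*} [CommRing R] {n : ℕ} (r : ℕ)
    (A : Matrix (Fin n) (Fin n) R) : Matrix (Fin n) (Fin n) R :=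
  Matrix.of fun i j =>
    (((1 + (Polynomial.X : Polynomial R) • A.map (fun a => Polynomial.C a) :
        Matrix (Fin n) (Fin n) (Polynomial R)).adjugate) i j).coeff (n - r)

open Polynomial Matrix Finset in
/-- Let `H` be an `n×n` complex Hermitian matrix and `λ` an eigenvalue of `H` of
algebraic multiplicity `s > 1`.  Then `det (λ•1 - H) = 0` and, for every `r` with
`1 ≤ r < s`, the reduced order-one complement of order `r` of the characteristic
matrix vanishes identically. -/
theorem redComp_vanishes_below_multiplicity {n : ℕ} (H : Matrix (Fin n) (Fin n) ℂ)
    (hH : H.IsHermitian) (lam : ℂ) (s : ℕ) (hs : 1 < s)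
    (hmul : Polynomial.rootMultiplicity lam (Matrix.charpoly H) = s) :
    (lam • (1 : Matrix (Fin n) (Fin n) ℂ) - H).det = 0 ∧
      ∀ r : ℕ, 1 ≤ r → r < s →
        redComp r (lam • (1 : Matrix (Fin n) (Fin n) ℂ) - H) = 0 := by
  classical
  set U : Matrix (Fin n) (Fin n) ℂ := (hH.eigenvectorUnitary : Matrix (Fin n) (Fin n) ℂ) with hUdef
  have hU1 : U * star U = 1 := (Matrix.mem_unitaryGroup_iff).mp hH.eigenvectorUnitary.2
  have hU1' : star U * U = 1 := (Matrix.mem_unitaryGroup_iff').mp hH.eigenvectorUnitary.2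
  set μ : Fin n → ℂ := RCLike.ofReal ∘ hH.eigenvalues with hμdef
  have hspec : H = U * diagonal μ * star U := hH.spectral_theorem
  set c : Fin n → ℂ := fun i => lam - μ i with hcdef
  have hdiagc : diagonal c = lam • (1 : Matrix (Fin n) (Fin n) ℂ) - diagonal μ := by
    rw [smul_one_eq_diagonal, diagonal_sub]
  have hA : lam • (1 : Matrix (Fin n) (Fin n) ℂ) - H = U * diagonal c * star U := by
    rw [hdiagc, Matrix.mul_sub, Matrix.sub_mul, ← hspec]
    congr 1
    rw [Matrix.mul_smul, Matrix.mul_one, Matrix.smul_mul, hU1]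
  -- characteristic polynomial
  have hcharm : charmatrix H = (U.map C) * charmatrix (diagonal μ) * ((star U).map C) := by
    rw [charmatrix, charmatrix, Matrix.mul_sub, Matrix.sub_mul]
    congr 1
    · rw [scalar_apply, ← smul_one_eq_diagonal, Matrix.mul_smul, Matrix.smul_mul,
        Matrix.mul_one, ← Matrix.map_mul, hU1, Matrix.map_one _ (map_zero C) (map_one C)]
    · rw [RingHom.mapMatrix_apply, RingHom.mapMatrix_apply, ← Matrix.map_mul, ← Matrix.map_mul,
        ← hspec]
  have hcharpoly : H.charpoly = ∏ i, (X - C (μ i)) := by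
    rw [Matrix.charpoly, hcharm, det_mul, det_mul, mul_comm, ← mul_assoc, ← det_mul,
      ← Matrix.map_mul, hU1', Matrix.map_one _ (map_zero C) (map_one C), det_one, one_mul]
    rw [charmatrix, scalar_apply, RingHom.mapMatrix_apply,
      Matrix.diagonal_map (map_zero C), diagonal_sub, det_diagonal]
  have hroots : H.charpoly.roots = Finset.univ.val.map μ := by
    rw [hcharpoly]
    have : ∏ i, (X - C (μ i)) = ((Finset.univ.val.map μ).map (fun a => X - C a)).prod := by
      rw [Multiset.map_map]; rfl
    rw [this, roots_multiset_prod_X_sub_C]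
  have hcount : (Finset.univ.filter (fun i => lam = μ i)).card = s := by
    have hcr : H.charpoly.roots.count lam = rootMultiplicity lam H.charpoly :=
      Polynomial.count_roots _
    rw [hroots, hmul, Multiset.count_map] at hcr
    simpa [Finset.card, Finset.filter] using hcr
  have hsn : s ≤ n := by
    calc s = (Finset.univ.filter (fun i => lam = μ i)).card := hcount.symm
    _ ≤ Finset.univ.card := Finset.card_filter_le _ _
    _ = n := by simp
  have hc0 : ∀ i, c i = 0 ↔ lam = μ i := by
    intro i
    rw [show c i = lam - μ i from rfl, sub_eq_zero]
  have hcnz : (Finset.univ.filter (fun i => ¬ c i = 0)).card = n - s := by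
    have h1 : (Finset.univ.filter (fun i => c i = 0)).card = s := by
      rw [← hcount]; congr 1; apply Finset.filter_congr; intro i _
      simp only [hc0 i]
    have h2 := Finset.card_filter_add_card_filter_not
      (s := (Finset.univ : Finset (Fin n))) (p := fun i => c i = 0)
    rw [h1, Finset.card_univ, Fintype.card_fin] at h2
    omega
  constructor
  · -- determinant vanishes
    rw [hA, det_mul, det_mul, mul_comm, ← mul_assoc, ← det_mul, hU1', det_one, one_mul,
      det_diagonal]
    obtain ⟨i, hi⟩ : ∃ i, lam = μ i := by
      have : 0 < (Finset.univ.filter (fun i => lam = μ i)).card := by omega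
      obtain ⟨i, hi⟩ := Finset.card_pos.mp this
      exact ⟨i, (Finset.mem_filter.mp hi).2⟩
    exact Finset.prod_eq_zero (Finset.mem_univ i) ((hc0 i).mpr hi)
  · intro r hr1 hrs
    -- the polynomial matrix and its adjugate
    set Q : Matrix (Fin n) (Fin n) ℂ[X] := diagonal (fun i => 1 + X * C (c i)) with hQdef
    have hQ : (1 + (X : ℂ[X]) • (lam • (1 : Matrix (Fin n) (Fin n) ℂ) - H).map C)
        = (U.map C) * Q * ((star U).map C) := by
      rw [hA, hQdef]
      have hdiag : (1 : Matrix (Fin n) (Fin n) ℂ[X]) + (X : ℂ[X]) • (diagonal c).map C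
          = diagonal (fun i => 1 + X * C (c i)) := by
        rw [Matrix.diagonal_map (map_zero C), ← diagonal_smul, ← diagonal_one, ← diagonal_add]
        rfl
      rw [← hdiag, Matrix.mul_add, Matrix.add_mul, Matrix.mul_one, ← Matrix.map_mul, hU1,
        Matrix.map_one _ (map_zero C) (map_one C)]
      congr 1
      rw [Matrix.map_mul, Matrix.map_mul, Matrix.mul_smul, Matrix.smul_mul]
    have hmapadj : ∀ M : Matrix (Fin n) (Fin n) ℂ,
        (M.map (C : ℂ → ℂ[X])).adjugate = M.adjugate.map C := by
      intro M
      have := (C : ℂ →+* ℂ[X]).map_adjugate M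
      simpa only [RingHom.mapMatrix_apply, RingHom.coe_coe] using this.symm
    have hadj : (1 + (X : ℂ[X]) • (lam • (1 : Matrix (Fin n) (Fin n) ℂ) - H).map C).adjugate
        = ((star U).adjugate.map C) * Q.adjugate * (U.adjugate.map C) := by
      rw [hQ, adjugate_mul_distrib, adjugate_mul_distrib, hmapadj, hmapadj, Matrix.mul_assoc]
    -- coefficient of the adjugate of the diagonal part vanishes
    have hkey : ∀ a b, ((Q.adjugate) a b).coeff (n - r) = 0 := by
      intro a b
      rw [hQdef, adjugate_diagonal]
      rcases eq_or_ne a b with rfl | hab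
      · rw [diagonal_apply_eq]
        apply coeff_eq_zero_of_natDegree_lt
        have hdeg : (∏ j ∈ Finset.univ.erase a, (1 + X * C (c j))).natDegree ≤ n - s := by
          refine le_trans (natDegree_prod_le _ _) ?_
          calc ∑ j ∈ Finset.univ.erase a, (1 + X * C (c j)).natDegree
              ≤ ∑ j ∈ (Finset.univ.erase a).filter (fun j => ¬ c j = 0), 1 := by
                rw [Finset.sum_filter]
                refine Finset.sum_le_sum fun j _ => ?_
                by_cases hj : c j = 0
                · simp [hj]
                · rw [if_pos hj]
                  refine le_trans (natDegree_add_le _ _) ?_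
                  simp only [natDegree_one, max_le_iff]
                  exact ⟨Nat.zero_le 1, le_trans (natDegree_mul_le) (by simp)⟩
            _ = ((Finset.univ.erase a).filter (fun j => ¬ c j = 0)).card := by
                rw [Finset.sum_const, smul_eq_mul, mul_one]
            _ ≤ (Finset.univ.filter (fun j => ¬ c j = 0)).card := by
                apply Finset.card_le_card
                exact Finset.filter_subset_filter _ (Finset.erase_subset _ _)
            _ = n - s := hcnz
        omega
      · rw [diagonal_apply_ne _ hab, coeff_zero]
    -- conclude
    ext i j
    simp only [redComp, Matrix.of_apply, Matrix.zero_apply]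
    rw [hadj, Matrix.mul_apply, finset_sum_coeff]
    refine Finset.sum_eq_zero fun k _ => ?_
    rw [Matrix.mul_apply, Finset.sum_mul, finset_sum_coeff]
    refine Finset.sum_eq_zero fun m _ => ?_
    simp only [Matrix.map_apply]
    rw [mul_assoc, coeff_C_mul, coeff_mul_C, hkey, zero_mul, mul_zero]
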